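/- Let k be a field and H a bialgebra over k, with comultiplication Δ(h) = Σ h_{(1)} ⊗ h_{(2)} and counit ε. Let (M, ρ, δ) be a right-right Hopf module over H: ρ : M ⊗ H → M is a unital associative right action (written m·h), δ : M → M ⊗ H is a counital coassociative right coaction (written δ(m) = Σ m_{(0)} ⊗ m_{(1)}), and the Hopf compatibility δ(m·h) = Σ m_{(0)}·h_{(1)} ⊗ m_{(1)}h_{(2)} holds. Let H* ⊗_{σ_bi} H be the algebra whose underlying space is H* ⊗ H with multiplication (l ⊗ h)(l' ⊗ h') = Σ (l * (x ↦ l'(x·h_{(2)}))) ⊗ h_{(1)}h', where (l * l')(x) = Σ l(x_{(2)}) l'(x_{(1)}), and unit ε ⊗ 1. Then the linear map M ⊗ (H* ⊗ H) → M, m ⊗ (l ⊗ h) ↦ Σ l(m_{(1)}) (m_{(0)}·h), is a unital associative right action of H* ⊗_{σ_bi} H on M. -/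

import Mathlib

open TensorProduct

variable (k : Type*) [Field k]

/-- The multiplication of the twisted (braided) tensor product `Q ⊗_ξ P`. -/
noncomputable def twistMul {P Q : Type*} [AddCommGroup P] [Module k P]
    [AddCommGroup Q] [Module k Q]
    (μQ : Q ⊗[k] Q →ₗ[k] Q) (μP : P ⊗[k] P →ₗ[k] P)
    (ξ : P ⊗[k] Q →ₗ[k] Q ⊗[k] P) :
    (Q ⊗[k] P) ⊗[k] (Q ⊗[k] P) →ₗ[k] Q ⊗[k] P :=
  (μQ.rTensor P)
    ∘ₗ (TensorProduct.assoc k Q Q P).symm.toLinearMap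
    ∘ₗ (LinearMap.lTensor Q
          ((μP.lTensor Q)
            ∘ₗ (TensorProduct.assoc k Q P P).toLinearMap
            ∘ₗ (ξ.rTensor P)
            ∘ₗ (TensorProduct.assoc k P Q P).symm.toLinearMap))
    ∘ₗ (TensorProduct.assoc k Q P (Q ⊗[k] P)).toLinearMap

variable (H : Type*) [Ring H] [Bialgebra k H]

/-- The bilinear contraction `H ⊗ H* → H*`, `h ⊗ l ↦ (x ↦ l (x * h))`. -/
noncomputable def rightMulDual : H ⊗[k] Module.Dual k H →ₗ[k] Module.Dual k H :=
  TensorProduct.lift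
    ((LinearMap.llcomp k H H k).flip ∘ₗ (LinearMap.mul k H).flip)

/-- The braiding `σ_bi : H ⊗ H* → H* ⊗ H`,
`h ⊗ l ↦ Σ (x ↦ l (x · h₍₂₎)) ⊗ h₍₁₎` (Sweedler notation). -/
noncomputable def sigmaBi : H ⊗[k] Module.Dual k H →ₗ[k] Module.Dual k H ⊗[k] H :=
  (TensorProduct.comm k H (Module.Dual k H)).toLinearMap
    ∘ₗ (LinearMap.lTensor H (rightMulDual k H))
    ∘ₗ (TensorProduct.assoc k H H (Module.Dual k H)).toLinearMap
    ∘ₗ ((Coalgebra.comul (R := k) (A := H)).rTensor (Module.Dual k H))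

/-- The convolution-type multiplication on `H*`: `(l * l')(x) = Σ l(x₍₂₎) l'(x₍₁₎)`. -/
noncomputable def convMul : Module.Dual k H ⊗[k] Module.Dual k H →ₗ[k] Module.Dual k H :=
  (LinearMap.llcomp k H (k ⊗[k] k) k (LinearMap.mul' k k))
    ∘ₗ (LinearMap.lcomp k (k ⊗[k] k) (Coalgebra.comul (R := k) (A := H)))
    ∘ₗ (TensorProduct.homTensorHomMap (σ₁₂ := RingHom.id k) (M := H) (N := H) (M₂ := k) (N₂ := k))
    ∘ₗ (TensorProduct.comm k (Module.Dual k H) (Module.Dual k H)).toLinearMap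

/-- The Heisenberg-double-type multiplication on `H* ⊗ H`:
`(l ⊗ h)(l' ⊗ h') = Σ (l * (x ↦ l'(x · h₍₂₎))) ⊗ h₍₁₎ h'`. -/
noncomputable def heisMul :
    (Module.Dual k H ⊗[k] H) ⊗[k] (Module.Dual k H ⊗[k] H)
      →ₗ[k] Module.Dual k H ⊗[k] H :=
  twistMul k (convMul k H) (LinearMap.mul' k H) (sigmaBi k H)

variable (M : Type*) [AddCommGroup M] [Module k M]

/-- From a right coaction `δ : M → M ⊗ H`, the contraction `M ⊗ H* → M`,
`m ⊗ l ↦ Σ l(m₍₁₎) m₍₀₎`. -/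
noncomputable def coactContract (δ : M →ₗ[k] M ⊗[k] H) :
    M ⊗[k] Module.Dual k H →ₗ[k] M :=
  (TensorProduct.rid k M).toLinearMap
    ∘ₗ (LinearMap.lTensor M (contractRight k H))
    ∘ₗ (TensorProduct.assoc k M H (Module.Dual k H)).toLinearMap
    ∘ₗ (δ.rTensor (Module.Dual k H))

/-- The Heisenberg action `M ⊗ (H* ⊗ H) → M`, `m ⊗ (l ⊗ h) ↦ Σ l(m₍₁₎) (m₍₀₎ · h)`,
associated to a right action `ρ` and a right coaction `δ`. -/
noncomputable def heisAction (ρ : M ⊗[k] H →ₗ[k] M) (δ : M →ₗ[k] M ⊗[k] H) :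
    M ⊗[k] (Module.Dual k H ⊗[k] H) →ₗ[k] M :=
  ρ ∘ₗ ((coactContract k H M δ).rTensor H)
    ∘ₗ (TensorProduct.assoc k M (Module.Dual k H) H).symm.toLinearMap

/-! Contracting the coaction, `m ⊗ l ↦ Σ l(m₍₁₎) m₍₀₎`, is a right action of `(H*, convMul)`
by coassociativity, and the Hopf compatibility `δ(m · h) = Σ m₍₀₎ h₍₁₎ ⊗ m₍₁₎ h₍₂₎` says that
moving `h` past `l` is governed by the braiding: `(m · h) · l = Σ (m · l(- · h₍₂₎)) · h₍₁₎`.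
Two right actions of algebras `Q` and `P` on `M` with `(m · p) · q = m · ξ(p ⊗ q)` always combine
into an action of the twisted tensor product `Q ⊗_ξ P`, since
`((m · q) · p) · (q' ⊗ p') = (m · q) · ξ(p ⊗ q') · p'`. -/

variable {k}

section TwistedAction

variable {M} {P Q : Type*} [AddCommGroup P] [Module k P] [AddCommGroup Q] [Module k Q]

def IsRightAction {A : Type*} [AddCommGroup A] [Module k A]
    (act : M ⊗[k] A →ₗ[k] M) (μ : A ⊗[k] A →ₗ[k] A) : Prop :=
  act ∘ₗ act.rTensor A ∘ₗ (TensorProduct.assoc k M A A).symm.toLinearMap = act ∘ₗ μ.lTensor M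

theorem IsRightAction.apply_apply {A : Type*} [AddCommGroup A] [Module k A]
    {act : M ⊗[k] A →ₗ[k] M} {μ : A ⊗[k] A →ₗ[k] A} (h : IsRightAction act μ)
    (m : M) (a b : A) : act (act (m ⊗ₜ a) ⊗ₜ b) = act (m ⊗ₜ μ (a ⊗ₜ b)) := by
  simpa using LinearMap.congr_fun h (m ⊗ₜ (a ⊗ₜ b))

def twistAction (actQ : M ⊗[k] Q →ₗ[k] M) (actP : M ⊗[k] P →ₗ[k] M) :
    M ⊗[k] (Q ⊗[k] P) →ₗ[k] M :=
  actP ∘ₗ actQ.rTensor P ∘ₗ (TensorProduct.assoc k M Q P).symm.toLinearMap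

@[simp]
theorem twistAction_tmul (actQ : M ⊗[k] Q →ₗ[k] M) (actP : M ⊗[k] P →ₗ[k] M)
    (m : M) (q : Q) (p : P) :
    twistAction actQ actP (m ⊗ₜ (q ⊗ₜ p)) = actP (actQ (m ⊗ₜ q) ⊗ₜ p) := by
  simp [twistAction]

theorem twistMul_tmul (μQ : Q ⊗[k] Q →ₗ[k] Q) (μP : P ⊗[k] P →ₗ[k] P)
    (ξ : P ⊗[k] Q →ₗ[k] Q ⊗[k] P) (q q' : Q) (p p' : P) :
    twistMul k μQ μP ξ ((q ⊗ₜ p) ⊗ₜ (q' ⊗ₜ p'))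
      = map (μQ ∘ₗ mk k Q Q q) (μP ∘ₗ (mk k P P).flip p') (ξ (p ⊗ₜ q')) := by
  simp only [twistMul, LinearMap.coe_comp, LinearEquiv.coe_coe, Function.comp_apply,
    assoc_tmul, assoc_symm_tmul, LinearMap.rTensor_tmul, LinearMap.lTensor_tmul]
  induction ξ (p ⊗ₜ q') using TensorProduct.induction_on with
  | zero => simp
  | tmul q'' p'' => simp
  | add t t' ht ht' => simp only [add_tmul, tmul_add, map_add, ht, ht']

theorem IsRightAction.twistAction {actQ : M ⊗[k] Q →ₗ[k] M} {actP : M ⊗[k] P →ₗ[k] M}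
    {μQ : Q ⊗[k] Q →ₗ[k] Q} {μP : P ⊗[k] P →ₗ[k] P} {ξ : P ⊗[k] Q →ₗ[k] Q ⊗[k] P}
    (hQ : IsRightAction actQ μQ) (hP : IsRightAction actP μP)
    (hξ : twistAction actQ actP ∘ₗ ξ.lTensor M = twistAction actP actQ) :
    IsRightAction (twistAction actQ actP) (twistMul k μQ μP ξ) := by
  unfold IsRightAction
  ext m q p q' p'
  have hcomm := (LinearMap.congr_fun hξ (actQ (m ⊗ₜ q) ⊗ₜ (p ⊗ₜ q'))).symm
  simp only [twistAction_tmul, LinearMap.coe_comp, Function.comp_apply,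
    LinearMap.lTensor_tmul] at hcomm
  simp only [LinearMap.coe_comp, LinearEquiv.coe_coe, Function.comp_apply,
    AlgebraTensorModule.curry_apply, curry_apply, LinearMap.restrictScalars_self,
    assoc_symm_tmul, LinearMap.rTensor_tmul, LinearMap.lTensor_tmul, twistAction_tmul,
    twistMul_tmul, hcomm]
  generalize ξ (p ⊗ₜ q') = t
  induction t using TensorProduct.induction_on with
  | zero => simp
  | tmul q'' p'' => simp [hQ.apply_apply, hP.apply_apply]
  | add t t' ht ht' => simp only [tmul_add, add_tmul, map_add, ht, ht']

end TwistedAction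

section HopfModule

variable {H M}

@[simp]
theorem rightMulDual_tmul (a : H) (l : Module.Dual k H) (x : H) :
    rightMulDual k H (a ⊗ₜ l) x = l (x * a) := by
  simp [rightMulDual]

theorem convMul_tmul (l l' : Module.Dual k H) (x : H) :
    convMul k H (l ⊗ₜ l') x = LinearMap.mul' k k (map l' l (Coalgebra.comul x)) := by
  simp [convMul]

@[simp]
theorem coactContract_tmul (δ : M →ₗ[k] M ⊗[k] H) (m : M) (l : Module.Dual k H) :
    coactContract k H M δ (m ⊗ₜ l) = TensorProduct.rid k M (l.lTensor M (δ m)) := by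
  simp only [coactContract, LinearMap.coe_comp, LinearEquiv.coe_coe, Function.comp_apply,
    LinearMap.rTensor_tmul]
  induction δ m using TensorProduct.induction_on with
  | zero => simp
  | tmul n a => simp
  | add t t' ht ht' => simp only [add_tmul, map_add, ht, ht']

theorem coactContract_tmul_counit {δ : M →ₗ[k] M ⊗[k] H}
    (hδcounit : (TensorProduct.rid k M).toLinearMap
        ∘ₗ (LinearMap.lTensor M (Coalgebra.counit (R := k) (A := H))) ∘ₗ δ
      = LinearMap.id) (m : M) :
    coactContract k H M δ (m ⊗ₜ Coalgebra.counit) = m := by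
  simpa using LinearMap.congr_fun hδcounit m

theorem isRightAction_coactContract {δ : M →ₗ[k] M ⊗[k] H}
    (hδcoassoc : (TensorProduct.assoc k M H H).toLinearMap ∘ₗ (δ.rTensor H) ∘ₗ δ
      = ((Coalgebra.comul (R := k) (A := H)).lTensor M) ∘ₗ δ) :
    IsRightAction (coactContract k H M δ) (convMul k H) := by
  unfold IsRightAction
  ext m l l'
  let Φ : M ⊗[k] (H ⊗[k] H) →ₗ[k] M :=
    (TensorProduct.rid k M).toLinearMap ∘ₗ (LinearMap.mul' k k ∘ₗ map l' l).lTensor M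
  have hL : ∀ t : M ⊗[k] H, TensorProduct.rid k M (l'.lTensor M (δ (TensorProduct.rid k M
      (l.lTensor M t)))) = Φ (TensorProduct.assoc k M H H (δ.rTensor H t)) := by
    intro t
    induction t using TensorProduct.induction_on with
    | zero => simp
    | tmul n a =>
      simp only [LinearMap.lTensor_tmul, rid_tmul, map_smul, LinearMap.rTensor_tmul]
      induction δ n using TensorProduct.induction_on with
      | zero => simp
      | tmul n' b => simp [Φ, smul_smul, mul_comm]
      | add u u' hu hu' => simp only [add_tmul, map_add, smul_add, hu, hu']
    | add t t' ht ht' => simp only [map_add, ht, ht']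
  have hR : ∀ t : M ⊗[k] H, TensorProduct.rid k M ((convMul k H (l ⊗ₜ l')).lTensor M t)
      = Φ ((Coalgebra.comul (R := k) (A := H)).lTensor M t) := by
    intro t
    induction t using TensorProduct.induction_on with
    | zero => simp
    | tmul n a => simp [Φ, convMul_tmul]
    | add t t' ht ht' => simp only [map_add, ht, ht']
  simp only [LinearMap.coe_comp, LinearEquiv.coe_coe, Function.comp_apply,
    AlgebraTensorModule.curry_apply, curry_apply, LinearMap.restrictScalars_self,
    assoc_symm_tmul, LinearMap.rTensor_tmul, LinearMap.lTensor_tmul, coactContract_tmul, hL, hR]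
  exact congrArg Φ (LinearMap.congr_fun hδcoassoc m)

theorem twistAction_coactContract_comp_sigmaBi {ρ : M ⊗[k] H →ₗ[k] M}
    {δ : M →ₗ[k] M ⊗[k] H}
    (hhopf : δ ∘ₗ ρ
      = (TensorProduct.map ρ (LinearMap.mul' k H))
        ∘ₗ (TensorProduct.tensorTensorTensorComm k M H H H).toLinearMap
        ∘ₗ (TensorProduct.map δ (Coalgebra.comul (R := k) (A := H)))) :
    twistAction (coactContract k H M δ) ρ ∘ₗ (sigmaBi k H).lTensor M
      = twistAction ρ (coactContract k H M δ) := by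
  ext m h l
  have hδρ := LinearMap.congr_fun hhopf (m ⊗ₜ h)
  simp only [LinearMap.coe_comp, LinearEquiv.coe_coe, Function.comp_apply, map_tmul] at hδρ
  simp only [sigmaBi, LinearMap.coe_comp, LinearEquiv.coe_coe, Function.comp_apply,
    AlgebraTensorModule.curry_apply, curry_apply, LinearMap.restrictScalars_self,
    LinearMap.lTensor_tmul, LinearMap.rTensor_tmul, LinearMap.lTensor_map, twistAction_tmul,
    coactContract_tmul, hδρ]
  induction Coalgebra.comul (R := k) h using TensorProduct.induction_on with
  | zero => simp
  | tmul b c =>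
    simp only [assoc_tmul, LinearMap.lTensor_tmul, comm_tmul, twistAction_tmul,
      coactContract_tmul]
    induction δ m using TensorProduct.induction_on with
    | zero => simp
    | tmul n a => simp [← smul_tmul']
    | add t t' ht ht' => simp only [add_tmul, map_add, ht, ht']
  | add c c' hc hc' => simp only [add_tmul, tmul_add, map_add, hc, hc']

theorem heisAction_eq_twistAction (ρ : M ⊗[k] H →ₗ[k] M) (δ : M →ₗ[k] M ⊗[k] H) :
    heisAction k H M ρ δ = twistAction (coactContract k H M δ) ρ :=
  rfl

end HopfModule

/-- A right-right Hopf module `(M, ρ, δ)` over a bialgebra `H` becomes a unital associative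
right module over the Heisenberg-double-type algebra `H* ⊗_{σ_bi} H` via
`m ⊗ (l ⊗ h) ↦ Σ l(m₍₁₎)(m₍₀₎ · h)`. -/
theorem hopf_module_is_heisenberg_module
    (ρ : M ⊗[k] H →ₗ[k] M) (δ : M →ₗ[k] M ⊗[k] H)
    (hρ1 : ∀ m : M, ρ (m ⊗ₜ[k] (1 : H)) = m)
    (hρassoc : ρ ∘ₗ (ρ.rTensor H) ∘ₗ (TensorProduct.assoc k M H H).symm.toLinearMap
      = ρ ∘ₗ ((LinearMap.mul' k H).lTensor M))
    (hδcounit : (TensorProduct.rid k M).toLinearMap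
        ∘ₗ (LinearMap.lTensor M (Coalgebra.counit (R := k) (A := H))) ∘ₗ δ
      = LinearMap.id)
    (hδcoassoc : (TensorProduct.assoc k M H H).toLinearMap ∘ₗ (δ.rTensor H) ∘ₗ δ
      = ((Coalgebra.comul (R := k) (A := H)).lTensor M) ∘ₗ δ)
    (hhopf : δ ∘ₗ ρ
      = (TensorProduct.map ρ (LinearMap.mul' k H))
        ∘ₗ (TensorProduct.tensorTensorTensorComm k M H H H).toLinearMap
        ∘ₗ (TensorProduct.map δ (Coalgebra.comul (R := k) (A := H)))) :
    (∀ m : M,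
        heisAction k H M ρ δ
          (m ⊗ₜ[k] ((Coalgebra.counit (R := k) (A := H)) ⊗ₜ[k] (1 : H))) = m)
    ∧ heisAction k H M ρ δ
        ∘ₗ ((heisAction k H M ρ δ).rTensor (Module.Dual k H ⊗[k] H))
        ∘ₗ (TensorProduct.assoc k M (Module.Dual k H ⊗[k] H)
              (Module.Dual k H ⊗[k] H)).symm.toLinearMap
      = heisAction k H M ρ δ ∘ₗ ((heisMul k H).lTensor M) := by
  refine ⟨fun m => ?_, ?_⟩
  · rw [heisAction_eq_twistAction, twistAction_tmul, coactContract_tmul_counit hδcounit, hρ1]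
  · exact (isRightAction_coactContract hδcoassoc).twistAction hρassoc
      (twistAction_coactContract_comp_sigmaBi hhopf)
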